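/- Let f : ℝ^{n×p} → ℝ be differentiable. For every X ∈ ℝ^{n×p}, ⟨G(X), X(XᵀX − I_p)⟩ = −(3/2)·⟨sym(Xᵀ∇f(X)), (XᵀX − I_p)²⟩, where ⟨A,B⟩ = tr(AᵀB) is the trace inner product. -/

import Mathlib

open Matrix BigOperators Finset Kronecker

/- Equip matrix spaces with the Frobenius norm (finite-dimensional, so the resulting calculus
notions such as `fderiv`/`Differentiable` are norm-independent). -/
attribute [local instance] Matrix.frobeniusNormedAddCommGroup Matrix.frobeniusNormedSpace

/-- The Frobenius norm of a real matrix. -/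
noncomputable def frob {m k : Type*} [Fintype m] [Fintype k] (A : Matrix m k ℝ) : ℝ :=
  Real.sqrt (∑ i, ∑ j, (A i j) ^ 2)

/-- The trace inner product ⟨A, B⟩ = tr(AᵀB) of real matrices. -/
noncomputable def minner {m k : Type*} [Fintype m] [Fintype k] (A B : Matrix m k ℝ) : ℝ :=
  (Aᵀ * B).trace

/-- The symmetric part sym(B) = (B + Bᵀ)/2 of a square matrix. -/
noncomputable def symPart {k : Type*} (B : Matrix k k ℝ) : Matrix k k ℝ :=
  (1 / 2 : ℝ) • (B + Bᵀ)

/-- The generalized Riemannian gradient G(X) = ∇f(X)((3/2)I - (1/2)XᵀX) - X·sym(Xᵀ∇f(X)),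
expressed in terms of the Euclidean gradient matrix `Gf = ∇f(X)`. -/
noncomputable def Gdir {n p : ℕ} (Gf X : Matrix (Fin n) (Fin p) ℝ) :
    Matrix (Fin n) (Fin p) ℝ :=
  Gf * ((3 / 2 : ℝ) • (1 : Matrix (Fin p) (Fin p) ℝ) - (1 / 2 : ℝ) • (Xᵀ * X))
    - X * symPart (Xᵀ * Gf)

/-- The feasibility direction E(X) = X(XᵀX - I). -/
noncomputable def Edir {n p : ℕ} (X : Matrix (Fin n) (Fin p) ℝ) :
    Matrix (Fin n) (Fin p) ℝ :=
  X * (Xᵀ * X - 1)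

/-- The spectral norm (largest singular value) of a real matrix, as the operator norm of the
associated Euclidean linear map. -/
noncomputable def specNorm {m k : Type*} [Fintype m] [Fintype k] [DecidableEq k]
    (A : Matrix m k ℝ) : ℝ :=
  ‖LinearMap.toContinuousLinearMap (Matrix.toEuclideanLin A)‖

/-- The smallest singular value of a real matrix: the square root of the smallest eigenvalue
of AᵀA (= AᴴA over ℝ). -/
noncomputable def sigmaMin {m k : Type*} [Fintype m] [Fintype k] [DecidableEq m] [DecidableEq k]
    (A : Matrix m k ℝ) : ℝ :=
  Real.sqrt (⨅ i, (show (Aᵀ * A).IsHermitian by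
    simpa using Matrix.isHermitian_conjTranspose_mul_self A).eigenvalues i)

/- With A = XᵀX and S = sym(Xᵀ∇f(X)), moving X across the trace inner product turns both
sides into inner products of square matrices with polynomials in A. These polynomials are
symmetric, so Xᵀ∇f(X) may be replaced by its symmetric part S, and the identity reduces to
(A - I)((3/2)I - (1/2)A) - A(A - I) = -(3/2)(A - I)². -/

section TraceInner

variable {m k l : Type*} [Fintype m] [Fintype k] [Fintype l]

theorem minner_sub_left (A B C : Matrix m k ℝ) :
    minner (A - B) C = minner A C - minner B C := by
  simp only [minner, transpose_sub, Matrix.sub_mul, trace_sub]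

theorem minner_sub_right (A B C : Matrix m k ℝ) :
    minner A (B - C) = minner A B - minner A C := by
  simp only [minner, Matrix.mul_sub, trace_sub]

theorem minner_smul_right (c : ℝ) (A B : Matrix m k ℝ) :
    minner A (c • B) = c * minner A B := by
  simp only [minner, Matrix.mul_smul, trace_smul, smul_eq_mul]

theorem minner_mul_left (X : Matrix m k ℝ) (S : Matrix k l ℝ) (Y : Matrix m l ℝ) :
    minner (X * S) Y = minner S (Xᵀ * Y) := by
  simp only [minner, transpose_mul, Matrix.mul_assoc]

theorem minner_mul_right (G : Matrix m k ℝ) (C : Matrix k l ℝ) (Y : Matrix m l ℝ) :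
    minner (G * C) Y = minner G (Y * Cᵀ) := by
  rw [minner, minner, transpose_mul, Matrix.mul_assoc, trace_mul_comm, Matrix.mul_assoc]

theorem minner_comm (A B : Matrix m k ℝ) : minner A B = minner B A := by
  rw [minner, minner, ← trace_transpose, transpose_mul, transpose_transpose]

end TraceInner

theorem minner_symPart_of_isSymm {k : Type*} [Fintype k] {B M : Matrix k k ℝ} (hM : M.IsSymm) :
    minner (symPart B) M = minner B M := by
  have hBt : minner Bᵀ M = minner B M := by
    rw [minner, minner, transpose_transpose, ← trace_transpose (B * M), transpose_mul, hM.eq,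
      trace_mul_comm]
  simp only [symPart, minner, transpose_smul, transpose_add, Matrix.smul_mul, Matrix.add_mul,
    trace_smul, trace_add, smul_eq_mul] at hBt ⊢
  rw [hBt]
  ring

theorem Matrix.IsSymm.mul_of_commute {k α : Type*} [Fintype k] [CommSemiring α]
    {A B : Matrix k k α} (hA : A.IsSymm) (hB : B.IsSymm) (hAB : Commute A B) : (A * B).IsSymm := by
  rw [IsSymm, transpose_mul, hA.eq, hB.eq, hAB.eq]

theorem stmt3_general {n p : ℕ}
    (gradf : Matrix (Fin n) (Fin p) ℝ → Matrix (Fin n) (Fin p) ℝ)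
    (X : Matrix (Fin n) (Fin p) ℝ) :
    minner (Gdir (gradf X) X) (X * (Xᵀ * X - 1))
      = -(3 / 2) * minner (symPart (Xᵀ * gradf X)) ((Xᵀ * X - 1) ^ 2) := by
  set A := Xᵀ * X
  set C : Matrix (Fin p) (Fin p) ℝ := (3 / 2 : ℝ) • 1 - (1 / 2 : ℝ) • A
  set S := symPart (Xᵀ * gradf X)
  have hA : A.IsSymm := by rw [IsSymm, transpose_mul, transpose_transpose]
  have hC : C.IsSymm := (isSymm_one.smul _).sub (hA.smul _)
  have hAC : Commute (A - 1) C :=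
    ((Commute.one_right _).smul_right _).sub_right
      (((Commute.refl A).sub_left (Commute.one_left A)).smul_right _)
  have hgrad_term : minner (gradf X * C) (X * (A - 1)) = minner (Xᵀ * gradf X) ((A - 1) * C) := by
    rw [minner_mul_right, hC.eq, Matrix.mul_assoc, minner_comm, minner_mul_left, minner_comm]
  have hsym_term : minner (X * S) (X * (A - 1)) = minner S (A * (A - 1)) := by
    rw [minner_mul_left, ← Matrix.mul_assoc]
  calc minner (Gdir (gradf X) X) (X * (A - 1))
      = minner (Xᵀ * gradf X) ((A - 1) * C) - minner S (A * (A - 1)) := by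
        rw [Gdir, minner_sub_left, hgrad_term, hsym_term]
    _ = minner S ((A - 1) * C - A * (A - 1)) := by
        rw [minner_sub_right,
          minner_symPart_of_isSymm ((hA.sub isSymm_one).mul_of_commute hC hAC)]
    _ = minner S ((-(3 / 2) : ℝ) • (A - 1) ^ 2) := by
        congr 1
        simp only [C, sq, Matrix.mul_sub, Matrix.sub_mul, Matrix.mul_smul, Matrix.mul_one,
          Matrix.one_mul]
        module
    _ = -(3 / 2) * minner S ((A - 1) ^ 2) := minner_smul_right _ _ _

/-- For differentiable `f` with gradient `gradf` and every `X`,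
`⟨G(X), X(XᵀX - I)⟩ = -(3/2)·⟨sym(Xᵀ∇f(X)), (XᵀX - I)²⟩`. -/
theorem stmt3 {n p : ℕ} (f : Matrix (Fin n) (Fin p) ℝ → ℝ)
    (hf : Differentiable ℝ f)
    (gradf : Matrix (Fin n) (Fin p) ℝ → Matrix (Fin n) (Fin p) ℝ)
    (hgrad : ∀ X V, fderiv ℝ f X V = minner (gradf X) V)
    (X : Matrix (Fin n) (Fin p) ℝ) :
    minner (Gdir (gradf X) X) (X * (Xᵀ * X - 1))
      = -(3 / 2) * minner (symPart (Xᵀ * gradf X)) ((Xᵀ * X - 1) ^ 2) :=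
  stmt3_general gradf X
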